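/- Let 𝔾=(𝕍,𝔼) be a locally finite, connected, countably infinite graph and let E ⊆ 𝔼 be such that every vertex of 𝕍 is incident to at least one edge of 𝔼∖E and any two distinct vertices of 𝕍 are ∞-connected in 𝔾∖E. Then the restriction map ω ↦ ω|_E from Ω_∅(𝔾) to (ZMod 2)^E is surjective, and the pushforward of UEG_𝔾 under this restriction is the Bernoulli(1/2) product measure on (ZMod 2)^E. -/

import Mathlib

open MeasureTheory

noncomputable section

instance : MeasurableSpace (ZMod 2) := ⊤

/-- The source (mod-2 boundary) of a configuration on a set `E` of edges, at a vertex `v`: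
the mod-2 number of open edges incident to `v`. -/
def srcAt {V : Type*} {E : Set (Sym2 V)} (ω : E → ZMod 2) (v : V) : ZMod 2 :=
  (Set.ncard {e : E | ω e = 1 ∧ v ∈ (e : Sym2 V)} : ZMod 2)

/-- A configuration is even (sourceless). -/
def IsEvenConf {V : Type*} {E : Set (Sym2 V)} (ω : E → ZMod 2) : Prop :=
  ∀ v : V, srcAt ω v = 0

/-- `μ` is the uniform even subgraph measure (the Haar probability measure on the
group of even configurations): a probability measure supported on even configurations
and invariant under translation (symmetric difference) by every even configuration. -/
def IsUEG {V : Type*} (E : Set (Sym2 V)) (μ : Measure (E → ZMod 2)) : Prop :=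
  IsProbabilityMeasure μ ∧ μ {ω | IsEvenConf ω} = 1 ∧
    ∀ γ : E → ZMod 2, IsEvenConf γ → Measure.map (fun ω => ω + γ) μ = μ

/-- The graph of open edges of a configuration. -/
def openGraph {V : Type*} {E : Set (Sym2 V)} (ω : E → ZMod 2) : SimpleGraph V :=
  SimpleGraph.fromEdgeSet {e : Sym2 V | ∃ h : e ∈ E, ω ⟨e, h⟩ = 1}

/-- The connected component of `v` in the graph of open edges is infinite. -/
def PercolatesAt {V : Type*} {E : Set (Sym2 V)} (ω : E → ZMod 2) (v : V) : Prop :=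
  {w : V | (openGraph ω).Reachable v w}.Infinite

/-- The hypercubic lattice `ℤ^d`. -/
def latticeGraph (d : ℕ) : SimpleGraph (Fin d → ℤ) where
  Adj u v := ∑ i, |u i - v i| = 1
  symm := ⟨fun u v h => by simpa [abs_sub_comm] using h⟩
  loopless := ⟨fun u h => by simp at h⟩

attribute [local instance] Classical.propDecidable

/-- Restriction of a configuration to a smaller edge set. -/
def restrictConf {V : Type*} {E' E : Set (Sym2 V)} (h : E' ⊆ E) (ω : E → ZMod 2) :
    E' → ZMod 2 := fun e => ω ⟨e.1, h e.2⟩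

/-- `ν` is the Bernoulli(1/2) product measure on configurations of `E`. -/
def IsBernoulliHalf {V : Type*} {E : Set (Sym2 V)} (ν : Measure (E → ZMod 2)) : Prop :=
  IsProbabilityMeasure ν ∧
    ∀ (F : Finset E) (σ : E → ZMod 2),
      ν {ω | ∀ e ∈ F, ω e = σ e} = (1 / 2 : ENNReal) ^ F.card

/-!
For an edge `e = xy ∈ E`, adding `e` to a configuration of `𝔾 ∖ E` with sources `x` and `y`
gives an even configuration `δₑ` whose restriction to `E` is the indicator of `e`. The
restriction of `Ω_∅` is therefore a submodule containing every finitely supported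
configuration on `E`, and it is closed as the continuous image of a compact set, so it is
everything. Translation by `δₑ` preserves any uniform even subgraph measure and flips exactly
the coordinate `e` of `E`, so its marginal on `E` is invariant under single-coordinate flips,
which forces every cylinder event on `n` edges to have probability `2⁻ⁿ`.
-/

lemma zmod_two_eq_ite (x : ZMod 2) : x = if x = 1 then 1 else 0 := by
  revert x; decide

lemma zmod_two_add_one_eq_iff_ne (x c : ZMod 2) : x + 1 = c ↔ x ≠ c := by
  revert x c; decide

lemma measure_cylinder_eq_of_map_add_single {ι : Type*} [DecidableEq ι]
    {ν : Measure (ι → ZMod 2)} [IsProbabilityMeasure ν]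
    (hflip : ∀ i, ν.map (· + Pi.single i 1) = ν) (F : Finset ι) (σ : ι → ZMod 2) :
    ν {ω | ∀ i ∈ F, ω i = σ i} = (1 / 2) ^ F.card := by
  induction F using Finset.induction_on with
  | empty => simp
  | @insert i F hi ih =>
    set C := {ω : ι → ZMod 2 | ∀ j ∈ F, ω j = σ j}
    set t := {ω : ι → ZMod 2 | ω i = σ i}
    have hC : MeasurableSet C := MeasurableSet.pi F.countable_toSet fun j _ => .singleton (σ j)
    have ht : MeasurableSet t := measurableSet_eq_fun (measurable_pi_apply i) measurable_const
    -- flipping coordinate `i` swaps the two halves of `C` and fixes `C` itself, as `i ∉ F`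
    have hpre : (· + Pi.single i 1) ⁻¹' (C ∩ t) = C \ t := by
      ext ω
      have hF : ∀ j ∈ F, (Pi.single i 1 : ι → ZMod 2) j = 0 :=
        fun j hj => Pi.single_eq_of_ne (ne_of_mem_of_not_mem hj hi) 1
      simp +contextual [C, t, hF, zmod_two_add_one_eq_iff_ne]
    have hhalves : ν (C ∩ t) + ν (C ∩ t) = (1 / 2) ^ F.card := by
      nth_rw 2 [← hflip i]
      rw [Measure.map_apply (measurable_add_const _) (hC.inter ht), hpre,
        measure_inter_add_sdiff C ht, ih]
    have hinsert : {ω : ι → ZMod 2 | ∀ j ∈ insert i F, ω j = σ j} = C ∩ t := by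
      ext ω
      simp [C, t, and_comm]
    rw [hinsert, Finset.card_insert_of_notMem hi, pow_succ, ← hhalves, ← mul_two, mul_one_div,
      ENNReal.mul_div_cancel_right two_ne_zero ENNReal.ofNat_ne_top]

-- `hX` rather than `[BorelSpace X]`: an uncountable product σ-algebra is coarser than Borel.
lemma exists_isProbabilityMeasure_map_add_eq_of_isCompact {X : Type*} [AddCommGroup X]
    [TopologicalSpace X] [IsTopologicalAddGroup X] [MeasurableSpace X] [MeasurableAdd X]
    (hX : ‹MeasurableSpace X› ≤ borel X) (H : AddSubgroup X) (hH : IsCompact (H : Set X)) :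
    ∃ μ : Measure X, IsProbabilityMeasure μ ∧ μ H = 1 ∧
      ∀ γ ∈ H, μ.map (· + γ) = μ := by
  let : MeasurableSpace H := borel H
  have : BorelSpace H := ⟨rfl⟩
  have : CompactSpace H := isCompact_iff_compactSpace.mp hH
  let ν : Measure H := Measure.addHaarMeasure ⊤
  have : IsProbabilityMeasure ν :=
    ⟨by rw [← TopologicalSpace.PositiveCompacts.coe_top]; exact Measure.addHaarMeasure_self⟩
  have hval : Measurable (Subtype.val : H → X) :=
    continuous_subtype_val.borel_measurable.mono le_rfl hX
  have : IsProbabilityMeasure (ν.map Subtype.val) :=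
    Measure.isProbabilityMeasure_map hval.aemeasurable
  refine ⟨ν.map Subtype.val, this, ?_, fun γ hγ => ?_⟩
  · have hH := Measure.le_map_apply (μ := ν) hval.aemeasurable (H : Set X)
    rw [Subtype.coe_preimage_self, measure_univ] at hH
    exact le_antisymm prob_le_one hH
  · rw [Measure.map_map (measurable_add_const γ) hval]
    conv_rhs => rw [← map_add_right_eq_self ν ⟨γ, hγ⟩]
    rw [Measure.map_map hval (measurable_add_const _)]
    rfl

section Configurations

variable {V : Type*} {A : Set (Sym2 V)}

lemma finite_incident {v : V} (hv : {e | e ∈ A ∧ v ∈ e}.Finite) :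
    {e : A | v ∈ (e : Sym2 V)}.Finite :=
  (hv.preimage Subtype.val_injective.injOn).subset fun e he => ⟨e.2, he⟩

lemma srcAt_eq_sum (ω : A → ZMod 2) {v : V} (hv : {e : A | v ∈ (e : Sym2 V)}.Finite) :
    srcAt ω v = ∑ e ∈ hv.toFinset, ω e := by
  have hopen : {e : A | ω e = 1 ∧ v ∈ (e : Sym2 V)} = ↑(hv.toFinset.filter (ω · = 1)) := by
    ext e
    simp [and_comm]
  rw [srcAt, hopen, Set.ncard_coe_finset, ← Finset.sum_boole]
  exact Finset.sum_congr rfl fun e _ => (zmod_two_eq_ite (ω e)).symm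

lemma srcAt_add {v : V} (hv : {e : A | v ∈ (e : Sym2 V)}.Finite) (ω γ : A → ZMod 2) :
    srcAt (ω + γ) v = srcAt ω v + srcAt γ v := by
  simp only [srcAt_eq_sum _ hv, Pi.add_apply, Finset.sum_add_distrib]

lemma srcAt_smul {v : V} (hv : {e : A | v ∈ (e : Sym2 V)}.Finite) (c : ZMod 2)
    (ω : A → ZMod 2) : srcAt (c • ω) v = c * srcAt ω v := by
  simp only [srcAt_eq_sum _ hv, Pi.smul_apply, smul_eq_mul, Finset.mul_sum]

lemma continuous_srcAt {v : V} (hv : {e : A | v ∈ (e : Sym2 V)}.Finite) :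
    Continuous fun ω : A → ZMod 2 => srcAt ω v :=
  (continuous_finsetSum _ fun e _ => continuous_apply e).congr fun ω => (srcAt_eq_sum ω hv).symm

def evenSubmodule (hfin : ∀ v, {e | e ∈ A ∧ v ∈ e}.Finite) :
    Submodule (ZMod 2) (A → ZMod 2) where
  carrier := {ω | IsEvenConf ω}
  add_mem' {ω γ} hω hγ v := by rw [srcAt_add (finite_incident (hfin v)), hω v, hγ v, add_zero]
  zero_mem' v := by rw [srcAt_eq_sum _ (finite_incident (hfin v))]; simp
  smul_mem' c ω hω v := by rw [srcAt_smul (finite_incident (hfin v)), hω v, mul_zero]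

lemma mem_evenSubmodule {hfin : ∀ v, {e | e ∈ A ∧ v ∈ e}.Finite} {ω : A → ZMod 2} :
    ω ∈ evenSubmodule hfin ↔ IsEvenConf ω := Iff.rfl

lemma isClosed_evenSubmodule (hfin : ∀ v, {e | e ∈ A ∧ v ∈ e}.Finite) :
    IsClosed (evenSubmodule hfin : Set (A → ZMod 2)) := by
  have hEven : (evenSubmodule hfin : Set (A → ZMod 2)) = ⋂ v, (srcAt · v) ⁻¹' {0} := by
    ext ω
    simp [mem_evenSubmodule, IsEvenConf]
  rw [hEven]
  exact isClosed_iInter fun v =>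
    isClosed_singleton.preimage (continuous_srcAt (finite_incident (hfin v)))

lemma srcAt_pi_single (e : A) (v : V) :
    srcAt (Pi.single e 1 : A → ZMod 2) v = if v ∈ (e : Sym2 V) then 1 else 0 := by
  have hopen : {f : A | (Pi.single e 1 : A → ZMod 2) f = 1 ∧ v ∈ (f : Sym2 V)}
      = {f | f = e ∧ v ∈ (e : Sym2 V)} := by
    ext f
    by_cases hf : f = e <;> simp [Pi.single_apply, hf]
  split_ifs with hv <;> simp [srcAt, hopen, hv]

def extendConf {B : Set (Sym2 V)} (γ : B → ZMod 2) : A → ZMod 2 :=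
  fun e => if he : (e : Sym2 V) ∈ B then γ ⟨e, he⟩ else 0

lemma srcAt_extendConf {B : Set (Sym2 V)} (h : B ⊆ A) (γ : B → ZMod 2) (v : V) :
    srcAt (extendConf γ : A → ZMod 2) v = srcAt γ v := by
  have : {e : A | (extendConf γ : A → ZMod 2) e = 1 ∧ v ∈ (e : Sym2 V)}
      = Set.inclusion h '' {e : B | γ e = 1 ∧ v ∈ (e : Sym2 V)} := by
    ext ⟨e, he⟩
    by_cases heB : e ∈ B <;> simp [extendConf, heB]
  rw [srcAt, srcAt, this, Set.ncard_image_of_injective _ (Set.inclusion_injective h)]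

lemma restrictConf_extendConf_of_disjoint {E B : Set (Sym2 V)} (hE : E ⊆ A)
    (hEB : Disjoint E B) (γ : B → ZMod 2) : restrictConf hE (extendConf γ) = 0 :=
  funext fun e => dif_neg (hEB.notMem_of_mem_left e.2)

lemma restrictConf_add {E : Set (Sym2 V)} (hE : E ⊆ A) (ω γ : A → ZMod 2) :
    restrictConf hE (ω + γ) = restrictConf hE ω + restrictConf hE γ := rfl

lemma restrictConf_pi_single {E : Set (Sym2 V)} (hE : E ⊆ A) (e : E) (c : ZMod 2) :
    restrictConf hE (Pi.single (Set.inclusion hE e) c) = Pi.single e c :=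
  funext fun f => by simp [restrictConf, Pi.single_apply, Subtype.ext_iff]

lemma exists_isEvenConf_restrictConf_eq_single {G : SimpleGraph V}
    (hlf : ∀ v : V, {e : Sym2 V | e ∈ G.edgeSet ∧ v ∈ e}.Finite)
    {E : Set (Sym2 V)} (hE : E ⊆ G.edgeSet)
    (hinfconn : ∀ x y : V, x ≠ y →
      ∃ γ : ↥(G.edgeSet \ E) → ZMod 2,
        ∀ v : V, srcAt γ v = if v = x ∨ v = y then 1 else 0)
    (e : E) :
    ∃ δ : G.edgeSet → ZMod 2, IsEvenConf δ ∧ restrictConf hE δ = Pi.single e 1 := by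
  obtain ⟨e, he⟩ := e
  induction e using Sym2.ind with | _ x y => ?_
  obtain ⟨γ, hγ⟩ := hinfconn x y (G.mem_edgeSet.mp (hE he)).ne
  refine ⟨Pi.single (Set.inclusion hE ⟨s(x, y), he⟩) 1 + extendConf γ, fun v => ?_, ?_⟩
  · rw [srcAt_add (finite_incident (hlf v)), srcAt_pi_single, srcAt_extendConf Set.sdiff_subset,
      hγ]
    simp only [Sym2.mem_iff]
    split_ifs <;> decide
  · rw [restrictConf_add, restrictConf_pi_single,
      restrictConf_extendConf_of_disjoint hE Set.disjoint_sdiff_right, add_zero]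

lemma exists_isEvenConf_restrictConf_eq {E : Set (Sym2 V)}
    (hfin : ∀ v, {e | e ∈ A ∧ v ∈ e}.Finite) (hE : E ⊆ A)
    (hsingle : ∀ e : E, ∃ δ : A → ZMod 2,
      IsEvenConf δ ∧ restrictConf hE δ = Pi.single e 1)
    (σ : E → ZMod 2) : ∃ ω : A → ZMod 2, IsEvenConf ω ∧ restrictConf hE ω = σ := by
  let R := LinearMap.funLeft (ZMod 2) (ZMod 2) (Set.inclusion hE)
  let S := (evenSubmodule hfin).map R
  have hS : IsClosed (S : Set (E → ZMod 2)) :=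
    ((isClosed_evenSubmodule hfin).isCompact.image
      (continuous_pi fun e => continuous_apply _)).isClosed
  have hsingle_mem (e : E) (c : ZMod 2) : Pi.single e c ∈ S := by
    obtain ⟨δ, hδ, hδe⟩ := hsingle e
    rw [← mul_one c, ← smul_eq_mul, Pi.single_smul', ← hδe]
    exact S.smul_mem c ⟨δ, hδ, rfl⟩
  have hsum : HasSum (fun e => Pi.single e (σ e)) σ :=
    Pi.hasSum.2 fun e => (hasSum_pi_single e (σ e)).congr_fun fun i => by
      by_cases h : i = e <;> simp [h]
  obtain ⟨ω, hω, hωσ⟩ := hS.mem_of_tendsto hsum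
    (Filter.Eventually.of_forall fun F => S.sum_mem fun e _ => hsingle_mem e (σ e))
  exact ⟨ω, hω, hωσ⟩

lemma exists_isUEG (hfin : ∀ v, {e | e ∈ A ∧ v ∈ e}.Finite) :
    ∃ μ, IsUEG A μ := by
  obtain ⟨μ, hμ, hμH, hμinv⟩ := exists_isProbabilityMeasure_map_add_eq_of_isCompact
    pi_le_borel_pi (evenSubmodule hfin).toAddSubgroup (isClosed_evenSubmodule hfin).isCompact
  exact ⟨μ, hμ, hμH, fun γ hγ => hμinv γ hγ⟩

lemma measurable_restrictConf {E : Set (Sym2 V)} (h : E ⊆ A) :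
    Measurable (restrictConf h) :=
  measurable_pi_lambda _ fun _ => measurable_pi_apply _

lemma map_restrictConf_map_add {E : Set (Sym2 V)} (h : E ⊆ A)
    {μ : Measure (A → ZMod 2)} {δ : A → ZMod 2} (hδ : μ.map (· + δ) = μ) :
    (μ.map (restrictConf h)).map (· + restrictConf h δ) = μ.map (restrictConf h) := by
  rw [Measure.map_map (measurable_add_const _) (measurable_restrictConf h)]
  conv_rhs => rw [← hδ]
  rw [Measure.map_map (measurable_restrictConf h) (measurable_add_const _)]
  rfl

lemma isBernoulliHalf_map_restrictConf {E : Set (Sym2 V)} (h : E ⊆ A)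
    {μ : Measure (A → ZMod 2)} (hμ : IsUEG A μ)
    (hsingle : ∀ e : E, ∃ δ : A → ZMod 2,
      IsEvenConf δ ∧ restrictConf h δ = Pi.single e 1) :
    IsBernoulliHalf (μ.map (restrictConf h)) := by
  have := hμ.1
  have := Measure.isProbabilityMeasure_map (μ := μ) (measurable_restrictConf h).aemeasurable
  refine ⟨inferInstance, measure_cylinder_eq_of_map_add_single fun e => ?_⟩
  obtain ⟨δ, hδ, hδe⟩ := hsingle e
  rw [← hδe]
  exact map_restrictConf_map_add h (hμ.2.2 δ hδ)

end Configurations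

theorem ueg_marginal_bernoulli_half_general {V : Type}
    (G : SimpleGraph V)
    (hlf : ∀ v : V, {e : Sym2 V | e ∈ G.edgeSet ∧ v ∈ e}.Finite)
    (E : Set (Sym2 V)) (hE : E ⊆ G.edgeSet)
    (hinfconn : ∀ x y : V, x ≠ y →
      ∃ γ : ↥(G.edgeSet \ E) → ZMod 2,
        ∀ v : V, srcAt γ v = if v = x ∨ v = y then 1 else 0) :
    (∀ σ : E → ZMod 2, ∃ ω : G.edgeSet → ZMod 2,
        IsEvenConf ω ∧ restrictConf hE ω = σ) ∧
    (∃ μ, IsUEG G.edgeSet μ) ∧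
    (∀ μ, IsUEG G.edgeSet μ → IsBernoulliHalf (Measure.map (restrictConf hE) μ)) := by
  have hsingle := exists_isEvenConf_restrictConf_eq_single hlf hE hinfconn
  exact ⟨exists_isEvenConf_restrictConf_eq hlf hE hsingle, exists_isUEG hlf,
    fun μ hμ => isBernoulliHalf_map_restrictConf hE hμ hsingle⟩

theorem ueg_marginal_bernoulli_half {V : Type} [Countable V] [Infinite V]
    (G : SimpleGraph V)
    (hlf : ∀ v : V, {e : Sym2 V | e ∈ G.edgeSet ∧ v ∈ e}.Finite)
    (hconn : G.Connected)
    (E : Set (Sym2 V)) (hE : E ⊆ G.edgeSet)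
    (hcover : ∀ v : V, ∃ e ∈ G.edgeSet \ E, v ∈ e)
    (hinfconn : ∀ x y : V, x ≠ y →
      ∃ γ : ↥(G.edgeSet \ E) → ZMod 2,
        ∀ v : V, srcAt γ v = if v = x ∨ v = y then 1 else 0) :
    (∀ σ : E → ZMod 2, ∃ ω : G.edgeSet → ZMod 2,
        IsEvenConf ω ∧ restrictConf hE ω = σ) ∧
    (∃ μ, IsUEG G.edgeSet μ) ∧
    (∀ μ, IsUEG G.edgeSet μ → IsBernoulliHalf (Measure.map (restrictConf hE) μ)) :=
  ueg_marginal_bernoulli_half_general G hlf E hE hinfconn
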